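/- arXiv:2209.11816 — 5 statements merged into one kernel-verified Lean document; each statement's English description precedes it below -/
import Mathlib

section
/- Let K be a number field with ring of integers O_K, let a be a nonzero fractional ideal of K, let q ⊆ O_K be a nonzero proper ideal, and let α ∈ a be a nonzero element. Then the residue class of α in a/qa generates a/qa as an O_K-module if and only if v_𝔭(α) = v_𝔭(a) for every prime ideal 𝔭 dividing q, where v_𝔭 denotes the 𝔭-adic valuation. -/
open NumberField FractionalIdeal IsDedekindDomain
open scoped nonZeroDivisors

/-!
The class of `α` generates `a/qa` iff `qa + (α) = a`. Multiplying by `a⁻¹`, this says that `q` is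
coprime to the integral ideal `(α)a⁻¹`, i.e. that no prime `𝔭 ∣ q` divides `(α)a⁻¹`, whose
`𝔭`-adic valuation is `v_𝔭(α) - v_𝔭(a)`.
-/

namespace Submodule

variable {R V : Type*} [Ring R] [AddCommGroup V] [Module R V]

theorem span_singleton_quotient_mk_eq_top_iff {M : Type*} [AddCommGroup M] [Module R M]
    (N : Submodule R M) (x : M) :
    span R {(Quotient.mk x : M ⧸ N)} = ⊤ ↔ N ⊔ span R {x} = ⊤ := by
  rw [← map_mkQ_eq_top, map_span, Set.image_singleton, mkQ_apply]

theorem span_singleton_quotient_mk_comap_subtype_eq_top_iff {M P : Submodule R V} (hPM : P ≤ M)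
    {x : V} (hx : x ∈ M) :
    span R {(Quotient.mk ⟨x, hx⟩ : M ⧸ P.comap M.subtype)} = ⊤ ↔ P ⊔ span R {x} = M := by
  rw [span_singleton_quotient_mk_eq_top_iff,
    ← (map_injective_of_injective M.injective_subtype).eq_iff, map_sup, map_comap_subtype,
    inf_eq_right.mpr hPM, map_span, Set.image_singleton, map_top, range_subtype, subtype_apply]

end Submodule

namespace IsDedekindDomain

variable {R : Type*} [CommRing R] [IsDedekindDomain R]

theorem sup_eq_top_iff_forall_dvd_not_dvd {I : Ideal R} (hI : I ≠ ⊥) (J : Ideal R) :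
    I ⊔ J = ⊤ ↔ ∀ v : HeightOneSpectrum R, v.asIdeal ∣ I → ¬ v.asIdeal ∣ J := by
  simp only [Ideal.dvd_iff_le]
  constructor
  · intro h v hvI hvJ
    exact v.isPrime.ne_top (top_le_iff.mp (h ▸ sup_le hvI hvJ))
  · intro h
    refine Ideal.isCoprime_iff_sup_eq.mp (Ideal.coprime_of_no_prime_ge fun P hIP hJP hP ↦ ?_)
    exact h ⟨P, hP, ne_bot_of_le_ne_bot hI hIP⟩ hIP hJP

end IsDedekindDomain

namespace FractionalIdeal

theorem coe_coeIdeal_mul {R P : Type*} [CommRing R] [CommRing P] [Algebra R P] {S : Submonoid R}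
    (q : Ideal R) (a : FractionalIdeal S P) :
    ((q * a : FractionalIdeal S P) : Submodule R P) = q • (a : Submodule R P) := by
  rw [coe_mul, coe_coeIdeal]
  apply le_antisymm
  · rw [Submodule.mul_le]
    rintro _ ⟨r, hr, rfl⟩ y hy
    rw [Algebra.linearMap_apply, ← Algebra.smul_def]
    exact Submodule.smul_mem_smul hr hy
  · rw [Submodule.smul_le]
    intro r hr y hy
    rw [Algebra.smul_def]
    exact Submodule.mul_mem_mul (Submodule.mem_map_of_mem hr) hy

variable {R K : Type*} [CommRing R] [IsDedekindDomain R] [Field K] [Algebra R K]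
  [IsFractionRing R K]

theorem count_coe_eq_zero_iff (v : HeightOneSpectrum R) {J : Ideal R} (hJ : J ≠ 0) :
    count K v (J : FractionalIdeal R⁰ K) = 0 ↔ ¬ v.asIdeal ∣ J := by
  classical
  rw [count_coe K v hJ, Nat.cast_eq_zero, ← Associates.count_ne_zero_iff_dvd hJ v.irreducible,
    not_not]

theorem coeIdeal_add_eq_one_iff {q : Ideal R} (hq : q ≠ ⊥) {I : FractionalIdeal R⁰ K}
    (hI₀ : I ≠ 0) (hI₁ : I ≤ 1) :
    (q : FractionalIdeal R⁰ K) + I = 1 ↔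
      ∀ v : HeightOneSpectrum R, v.asIdeal ∣ q → count K v I = 0 := by
  obtain ⟨J, rfl⟩ := le_one_iff_exists_coeIdeal.mp hI₁
  have hJ : J ≠ 0 := by rintro rfl; simp at hI₀
  rw [← coeIdeal_sup, ← coeIdeal_top, coeIdeal_inj,
    sup_eq_top_iff_forall_dvd_not_dvd hq]
  simp only [count_coe_eq_zero_iff _ hJ]

theorem coeIdeal_mul_add_eq_self_iff {q : Ideal R} (hq : q ≠ ⊥) {a b : FractionalIdeal R⁰ K}
    (ha : a ≠ 0) (hb₀ : b ≠ 0) (hba : b ≤ a) :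
    (q : FractionalIdeal R⁰ K) * a + b = a ↔
      ∀ v : HeightOneSpectrum R, v.asIdeal ∣ q → count K v b = count K v a := by
  have hba₁ : b * a⁻¹ ≤ 1 := by
    rw [← mul_inv_cancel₀ ha]
    gcongr
  rw [← (mul_left_injective₀ (inv_ne_zero ha)).eq_iff, add_mul, mul_assoc, mul_inv_cancel₀ ha,
    mul_one, coeIdeal_add_eq_one_iff hq (mul_ne_zero hb₀ (inv_ne_zero ha)) hba₁]
  simp only [count_mul K _ hb₀ (inv_ne_zero ha), count_inv, ← sub_eq_add_neg, sub_eq_zero]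

end FractionalIdeal

theorem generates_iff_valuation_eq_general
    (K : Type*) [Field K] [NumberField K]
    (a : FractionalIdeal (𝓞 K)⁰ K) (ha : a ≠ 0)
    (q : Ideal (𝓞 K)) (hq₀ : q ≠ ⊥)
    (α : K) (hα : α ∈ (a : Submodule (𝓞 K) K)) (hα₀ : α ≠ 0) :
    Submodule.span (𝓞 K)
        {(Submodule.Quotient.mk (⟨α, hα⟩ : (a : Submodule (𝓞 K) K)) :
          (a : Submodule (𝓞 K) K) ⧸
            Submodule.comap (a : Submodule (𝓞 K) K).subtype
              (q • (a : Submodule (𝓞 K) K)))} = ⊤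
      ↔ ∀ v : HeightOneSpectrum (𝓞 K), v.asIdeal ∣ q →
          FractionalIdeal.count K v (spanSingleton (𝓞 K)⁰ α) = FractionalIdeal.count K v a := by
  rw [Submodule.span_singleton_quotient_mk_comap_subtype_eq_top_iff Submodule.smul_le_right hα,
    ← coe_coeIdeal_mul, ← coe_spanSingleton (𝓞 K)⁰, ← Submodule.add_eq_sup, ← coe_add,
    coeToSubmodule_inj]
  exact coeIdeal_mul_add_eq_self_iff hq₀ ha (spanSingleton_ne_zero_iff.mpr hα₀)
    (spanSingleton_le_iff_mem.mpr hα)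

/-- **Valuative criterion for generators of `a/qa`.**
Let `a` be a nonzero fractional ideal of a number field `K`, `q` a nonzero proper ideal of
`𝓞 K`, and `α ∈ a` nonzero. Then the class of `α` generates `a/qa` as an `𝓞 K`-module
iff `v_𝔭(α) = v_𝔭(a)` for every prime `𝔭` dividing `q`. -/
theorem generates_iff_valuation_eq
    (K : Type*) [Field K] [NumberField K]
    (a : FractionalIdeal (𝓞 K)⁰ K) (ha : a ≠ 0)
    (q : Ideal (𝓞 K)) (hq₀ : q ≠ ⊥) (hq₁ : q ≠ ⊤)
    (α : K) (hα : α ∈ (a : Submodule (𝓞 K) K)) (hα₀ : α ≠ 0) :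
    Submodule.span (𝓞 K)
        {(Submodule.Quotient.mk (⟨α, hα⟩ : (a : Submodule (𝓞 K) K)) :
          (a : Submodule (𝓞 K) K) ⧸
            Submodule.comap (a : Submodule (𝓞 K) K).subtype
              (q • (a : Submodule (𝓞 K) K)))} = ⊤
      ↔ ∀ v : HeightOneSpectrum (𝓞 K), v.asIdeal ∣ q →
          FractionalIdeal.count K v (spanSingleton (𝓞 K)⁰ α) = FractionalIdeal.count K v a :=
  generates_iff_valuation_eq_general K a ha q hq₀ α hα hα₀
end

section
/- Let K be a number field of degree n and let a be a nonzero fractional ideal of K, viewed as a lattice in K⊗ℝ. There exists a constant C = C(K, a) such that for every X > 1, the number of points x ∈ a satisfying |x|_σ < X for every embedding σ and |x|_{σ_i} < 1 for at least one index i among the r₁ + r₂ archimedean places is at most C · X^{n−1}. -/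
open NumberField NumberField.mixedEmbedding
open scoped nonZeroDivisors Classical

/-!
Write the points of the lattice `a ⊂ K ⊗ ℝ` as integer combinations `∑ dᵢ bᵢ` of a basis; when
`‖x‖ ≤ X` the coordinates satisfy `|dᵢ| ≤ C₁ X`. The coordinate `x ↦ x_w ∈ ℂ` at a place `w` is
`ℝ`-linear and nonzero, so `(b_{i₀})_w ≠ 0` for some `i₀`. Once the other `n - 1` coordinates
are fixed, two admissible points with `|x_w| < 1` differ by `(dᵢ₀ - dᵢ₀') b_{i₀}`, whose
`w`-coordinate has modulus `< 2`; so only `2 / |(b_{i₀})_w| + 1` values of `dᵢ₀` remain. Each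
place therefore contributes `O(X^{n-1})` points, and there are finitely many places.
-/

open Finset in
theorem Int.card_le_of_forall_sub_le {s : Finset ℤ} {D : ℕ}
    (h : ∀ k ∈ s, ∀ l ∈ s, k - l ≤ D) : #s ≤ D + 1 := by
  rcases s.eq_empty_or_nonempty with rfl | hs
  · simp
  calc #s ≤ #(Icc (s.min' hs) (s.min' hs + D)) := card_le_card fun k hk =>
        mem_Icc.mpr ⟨s.min'_le k hk, by linarith [h k hk _ (s.min'_mem hs)]⟩
    _ = D + 1 := by simp [Int.card_Icc]; omega

section Slab

open Finset

variable {ι F : Type*} [Fintype ι] [NormedAddCommGroup F] [NormedSpace ℝ F]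

theorem sub_le_floor_of_norm_sum_zsmul_lt_one {c : ι → F} {i₀ : ι} (hc : c i₀ ≠ 0)
    {d d' : ι → ℤ} (hd : ‖∑ i, d i • c i‖ < 1) (hd' : ‖∑ i, d' i • c i‖ < 1)
    (h : ∀ i ≠ i₀, d i = d' i) : d i₀ - d' i₀ ≤ ⌊2 / ‖c i₀‖⌋₊ := by
  have hdiff : ∑ i, d i • c i - ∑ i, d' i • c i = (d i₀ - d' i₀) • c i₀ := by
    rw [← sum_sub_distrib, sum_eq_single i₀ (fun i _ hi => by rw [h i hi, sub_self]) (by simp),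
      sub_smul]
  have hlt : ((d i₀ - d' i₀ : ℤ) : ℝ) * ‖c i₀‖ < 2 := calc
    ((d i₀ - d' i₀ : ℤ) : ℝ) * ‖c i₀‖ ≤ ‖(d i₀ - d' i₀) • c i₀‖ := by
        rw [norm_zsmul ℝ, Real.norm_eq_abs]; gcongr; exact le_abs_self _
    _ < 2 := by rw [← hdiff]; linarith [norm_sub_le (∑ i, d i • c i) (∑ i, d' i • c i)]
  rw [Int.natCast_floor_eq_floor (by positivity)]
  exact Int.le_floor.mpr ((lt_div_iff₀ (norm_pos_iff.mpr hc)).mpr hlt).le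

theorem card_filter_norm_sum_zsmul_lt_one_le [DecidableEq ι] (c : ι → F) {i₀ : ι}
    (hc : c i₀ ≠ 0) (N : ℕ) :
    #{d ∈ Fintype.piFinset fun _ : ι => Icc (-N : ℤ) N | ‖∑ i, d i • c i‖ < 1} ≤
      (⌊2 / ‖c i₀‖⌋₊ + 1) * (2 * N + 1) ^ (Fintype.card ι - 1) := by
  set T := {d ∈ Fintype.piFinset fun _ : ι => Icc (-N : ℤ) N | ‖∑ i, d i • c i‖ < 1}
  let rest : (ι → ℤ) → {j // j ≠ i₀} → ℤ := fun d j => d j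
  have himage : T.image rest ⊆ Fintype.piFinset fun _ : {j // j ≠ i₀} => Icc (-N : ℤ) N := by
    simp only [subset_iff, mem_image, mem_filter, Fintype.mem_piFinset, T]
    rintro - ⟨d, ⟨hd, -⟩, rfl⟩ j
    exact hd j
  have hfibre : ∀ r ∈ T.image rest, #{d ∈ T | rest d = r} ≤ ⌊2 / ‖c i₀‖⌋₊ + 1 := by
    intro r _
    have hinj : Set.InjOn (fun d : ι → ℤ => d i₀) ↑({d ∈ T | rest d = r} : Finset (ι → ℤ)) := by
      intro d hd d' hd' h
      simp only [coe_filter, Set.mem_ofPred_eq] at hd hd'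
      funext i
      by_cases hi : i = i₀
      · subst hi; exact h
      · exact (congrFun hd.2 ⟨i, hi⟩).trans (congrFun hd'.2 ⟨i, hi⟩).symm
    rw [← card_image_of_injOn hinj]
    refine Int.card_le_of_forall_sub_le ?_
    simp only [mem_image, mem_filter, T]
    rintro - ⟨d, ⟨⟨-, hd⟩, hdr⟩, rfl⟩ - ⟨d', ⟨⟨-, hd'⟩, hd'r⟩, rfl⟩
    refine sub_le_floor_of_norm_sum_zsmul_lt_one hc hd hd' fun i hi => ?_
    exact (congrFun hdr ⟨i, hi⟩).trans (congrFun hd'r ⟨i, hi⟩).symm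
  calc #T ≤ (⌊2 / ‖c i₀‖⌋₊ + 1) * #(T.image rest) := card_le_mul_card_image _ _ hfibre
    _ ≤ (⌊2 / ‖c i₀‖⌋₊ + 1) * (2 * N + 1) ^ (Fintype.card ι - 1) := by
      gcongr
      refine (card_le_card himage).trans_eq ?_
      simp only [Fintype.card_piFinset, Int.card_Icc, prod_const, card_univ,
        Fintype.card_subtype_compl, Fintype.card_unique]
      congr 1
      omega

end Slab

namespace Module.Basis

open Finset Submodule Set

variable {ι E F : Type*} [Fintype ι] [NormedAddCommGroup E] [NormedSpace ℝ E]
  [NormedAddCommGroup F] [NormedSpace ℝ F]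

theorem exists_int_coeffs_of_mem_span_int (b : Basis ι ℝ E) {v : E}
    (hv : v ∈ span ℤ (range b)) :
    ∃ d : ι → ℤ, ∑ i, d i • b i = v ∧
      ∀ i, |(d i : ℝ)| ≤ ‖(b.equivFunL : E →L[ℝ] ι → ℝ)‖ * ‖v‖ := by
  obtain ⟨d, rfl⟩ := (mem_span_range_iff_exists_fun ℤ).mp hv
  have hcoeff : b.equivFunL (∑ i, d i • b i) = fun i => (d i : ℝ) := by
    change b.equivFun _ = _
    simp_rw [← Int.cast_smul_eq_zsmul ℝ, ← b.equivFun_symm_apply, LinearEquiv.apply_symm_apply]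
  refine ⟨d, rfl, fun i => ?_⟩
  calc |(d i : ℝ)| = ‖b.equivFunL (∑ i, d i • b i) i‖ := by rw [hcoeff, Real.norm_eq_abs]
    _ ≤ ‖b.equivFunL (∑ i, d i • b i)‖ := norm_le_pi_norm _ i
    _ ≤ _ := (b.equivFunL : E →L[ℝ] ι → ℝ).le_opNorm _

theorem exists_ncard_span_int_norm_lt_one_le (b : Basis ι ℝ E) {φ : E →ₗ[ℝ] F} (hφ : φ ≠ 0) :
    ∃ C : ℝ, ∀ R : ℝ, 1 ≤ R →
      {v | v ∈ span ℤ (range b) ∧ ‖v‖ ≤ R ∧ ‖φ v‖ < 1}.Finite ∧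
      ({v | v ∈ span ℤ (range b) ∧ ‖v‖ ≤ R ∧ ‖φ v‖ < 1}.ncard : ℝ) ≤
        C * R ^ (Fintype.card ι - 1) := by
  obtain ⟨i₀, hi₀⟩ : ∃ i, φ (b i) ≠ 0 := by
    by_contra! h
    exact hφ (b.ext fun i => by simpa using h i)
  set C₁ := ‖(b.equivFunL : E →L[ℝ] ι → ℝ)‖
  set m := ⌊2 / ‖φ (b i₀)‖⌋₊ + 1
  refine ⟨m * (2 * C₁ + 3) ^ (Fintype.card ι - 1), fun R hR => ?_⟩
  set S := {v | v ∈ span ℤ (range b) ∧ ‖v‖ ≤ R ∧ ‖φ v‖ < 1}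
  set N := ⌈C₁ * R⌉₊
  set T := {d ∈ Fintype.piFinset fun _ : ι => Icc (-N : ℤ) N | ‖∑ i, d i • φ (b i)‖ < 1}
  set g : (ι → ℤ) → E := fun d => ∑ i, d i • b i
  have hsub : S ⊆ g '' T := by
    rintro v ⟨hv, hvR, hφv⟩
    obtain ⟨d, rfl, hd⟩ := b.exists_int_coeffs_of_mem_span_int hv
    refine ⟨d, mem_filter.mpr ⟨Fintype.mem_piFinset.mpr fun i => ?_, ?_⟩, rfl⟩
    · have : |(d i : ℝ)| ≤ N := (hd i).trans <|
        (mul_le_mul_of_nonneg_left hvR (norm_nonneg _)).trans (Nat.le_ceil _)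
      rw [Finset.mem_Icc, ← abs_le]
      exact_mod_cast this
    · simpa [map_sum, map_zsmul] using hφv
  have hT : (g '' T).ncard ≤ m * (2 * N + 1) ^ (Fintype.card ι - 1) := by
    refine (Set.ncard_image_le T.finite_toSet).trans ?_
    rw [Set.ncard_coe_finset]
    exact card_filter_norm_sum_zsmul_lt_one_le (fun i => φ (b i)) hi₀ N
  have hN : (2 * N + 1 : ℝ) ≤ (2 * C₁ + 3) * R := by
    have hC₁ : 0 ≤ C₁ := norm_nonneg _
    have := Nat.ceil_lt_add_one (mul_nonneg hC₁ (by linarith : (0:ℝ) ≤ R))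
    nlinarith
  refine ⟨(T.finite_toSet.image _).subset hsub, ?_⟩
  calc (S.ncard : ℝ) ≤ (g '' T).ncard := by
        exact_mod_cast ncard_le_ncard hsub (T.finite_toSet.image _)
    _ ≤ m * (2 * N + 1) ^ (Fintype.card ι - 1) := mod_cast hT
    _ ≤ m * ((2 * C₁ + 3) * R) ^ (Fintype.card ι - 1) := by gcongr
    _ = m * (2 * C₁ + 3) ^ (Fintype.card ι - 1) * R ^ (Fintype.card ι - 1) := by
      rw [mul_pow, mul_assoc]

end Module.Basis

namespace NumberField.mixedEmbedding

variable {K : Type*} [Field K]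

noncomputable def placeCoord (w : InfinitePlace K) : mixedSpace K →ₗ[ℝ] ℂ :=
  if hw : w.IsReal then
    Complex.ofRealCLM.toLinearMap ∘ₗ LinearMap.proj ⟨w, hw⟩ ∘ₗ LinearMap.fst ℝ _ _
  else LinearMap.proj ⟨w, InfinitePlace.not_isReal_iff_isComplex.mp hw⟩ ∘ₗ LinearMap.snd ℝ _ _

theorem norm_placeCoord (w : InfinitePlace K) (x : mixedSpace K) :
    ‖placeCoord w x‖ = normAtPlace w x := by
  by_cases hw : w.IsReal
  · simp [placeCoord, hw, normAtPlace_apply_of_isReal hw]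
  · simp [placeCoord, hw,
      normAtPlace_apply_of_isComplex (InfinitePlace.not_isReal_iff_isComplex.mp hw)]

theorem placeCoord_ne_zero (w : InfinitePlace K) : placeCoord w ≠ 0 := by
  intro h
  simpa [h] using norm_placeCoord w (mixedEmbedding K 1)

theorem norm_le_of_forall_normAtPlace_le [NumberField K] {x : mixedSpace K} {r : ℝ}
    (h : ∀ w, normAtPlace w x ≤ r) : ‖x‖ ≤ r := by
  rw [norm_eq_sup'_normAtPlace]
  exact Finset.sup'_le _ _ fun w _ => h w

end NumberField.mixedEmbedding

/-- **Lattice points close to the axes are rare.**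
Let `K` be a number field of degree `n` and `a` a nonzero fractional ideal, viewed as a
lattice in `K⊗ℝ`. There is `C = C(K,a)` such that for every `X > 1`, the number of points
`x ∈ a` with `|x|_σ < X` for every embedding and `|x|_{σᵢ} < 1` for at least one `i` is at
most `C · X^{n−1}`. -/
theorem lattice_points_near_axes (K : Type*) [Field K] [NumberField K]
    (a : FractionalIdeal (𝓞 K)⁰ K) (ha : a ≠ 0) :
    ∃ C : ℝ, ∀ X : ℝ, 1 < X →
      {x : K | x ∈ (a : Submodule (𝓞 K) K) ∧
          (∀ w : InfinitePlace K, normAtPlace w (mixedEmbedding K x) < X) ∧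
          (∃ w : InfinitePlace K, normAtPlace w (mixedEmbedding K x) < 1)}.Finite ∧
      (Nat.card {x : K | x ∈ (a : Submodule (𝓞 K) K) ∧
          (∀ w : InfinitePlace K, normAtPlace w (mixedEmbedding K x) < X) ∧
          (∃ w : InfinitePlace K, normAtPlace w (mixedEmbedding K x) < 1)} : ℝ)
        ≤ C * X ^ (Module.finrank ℚ K - 1) := by
  set b := fractionalIdealLatticeBasis K (Units.mk0 a ha)
  choose C hC using fun w : InfinitePlace K => b.exists_ncard_span_int_norm_lt_one_le
    (placeCoord_ne_zero w)
  have hcard : Fintype.card (Module.Free.ChooseBasisIndex ℤ (Units.mk0 a ha)) =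
      Module.finrank ℚ K := by
    rw [← Module.finrank_eq_card_basis b, mixedEmbedding.finrank]
  refine ⟨∑ w, C w, fun X hX => ?_⟩
  set S := {x : K | x ∈ (a : Submodule (𝓞 K) K) ∧
    (∀ w : InfinitePlace K, normAtPlace w (mixedEmbedding K x) < X) ∧
    (∃ w : InfinitePlace K, normAtPlace w (mixedEmbedding K x) < 1)}
  set L := fun w : InfinitePlace K =>
    {v | v ∈ Submodule.span ℤ (Set.range b) ∧ ‖v‖ ≤ X ∧ ‖placeCoord w v‖ < 1}
  have hsub : mixedEmbedding K '' S ⊆ ⋃ w, L w := by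
    rintro - ⟨x, ⟨hxa, hxX, w, hw⟩, rfl⟩
    exact Set.mem_iUnion.mpr ⟨w, (mem_span_fractionalIdealLatticeBasis K _).mpr ⟨x, hxa, rfl⟩,
      norm_le_of_forall_normAtPlace_le fun w => (hxX w).le, by rwa [norm_placeCoord]⟩
  have hinj : Set.InjOn (mixedEmbedding K) S := (mixedEmbedding_injective K).injOn
  have hLfin : (⋃ w, L w).Finite := Set.finite_iUnion fun w => (hC w X hX.le).1
  refine ⟨(hLfin.subset hsub).of_finite_image hinj, ?_⟩
  rw [Nat.card_coe_set_eq, ← hinj.ncard_image, Finset.sum_mul]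
  calc ((mixedEmbedding K '' S).ncard : ℝ) ≤ (⋃ w, L w).ncard :=
        mod_cast Set.ncard_le_ncard hsub hLfin
    _ ≤ ∑ w, ((L w).ncard : ℝ) := by
        norm_cast; simpa using Finset.set_ncard_biUnion_le Finset.univ L
    _ ≤ ∑ w, C w * X ^ (Module.finrank ℚ K - 1) :=
        Finset.sum_le_sum fun w _ => hcard ▸ (hC w X hX.le).2
end

section
/- Let n ≥ 1 and let Λ ⊆ ℤ^n be a subgroup of finite index D = #(ℤ^n/Λ). Then there exists a ℤ-basis v₁, …, v_n of Λ such that every entry of every v_i has absolute value at most D. -/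
/-
Hermite normal form. For each coordinate `k`, the `k`-th entries of the vectors of `Λ` supported
on the coordinates `≤ k` form an ideal `d_k ℤ`; choosing for each `k` such a vector with `k`-th
entry `d_k` gives a lower triangular basis of `Λ`. Since `D • ℤⁿ ⊆ Λ`, each `d_k` divides `D`.
Reducing the entries below the diagonal modulo the pivot of their column, by adding multiples of
earlier basis vectors, keeps a basis and bounds every entry of column `j` by `|d_j| ≤ D`.
-/

open Submodule Set

theorem Submodule.nsmul_card_quotient_mem {M : Type*} [AddCommGroup M] (Λ : Submodule ℤ M) (x : M) :
    Nat.card (M ⧸ Λ) • x ∈ Λ :=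
  Λ.toAddSubgroup.nsmul_index_mem x

theorem Submodule.exists_basis_coe_eq {ι R M : Type*} [Ring R] [AddCommGroup M] [Module R M]
    {p : Submodule R M} {v : ι → M} (hli : LinearIndependent R v) (hspan : span R (range v) = p) :
    ∃ b : Module.Basis ι R p, ∀ i, (b i : M) = v i := by
  subst hspan
  exact ⟨.span hli, fun i => congrArg Subtype.val (Module.Basis.span_apply hli i)⟩

theorem linearIndependent_of_lowerTriangular {ι R : Type*} [Fintype ι] [LinearOrder ι]
    [CommRing R] [IsDomain R] {v : ι → ι → R} (hv : ∀ i j, i < j → v i j = 0) (hdiag : ∀ i, v i i ≠ 0) :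
    LinearIndependent R v := by
  have hdet : (Matrix.of v).det ≠ 0 := by
    rw [Matrix.det_of_isLowerTriangular (Matrix.of v) hv]
    exact Finset.prod_ne_zero_iff.mpr fun i _ => hdiag i
  exact Matrix.linearIndependent_rows_of_det_ne_zero hdet

def vanishingFrom (n m : ℕ) : Submodule ℤ (Fin n → ℤ) :=
  Submodule.pi {j | m ≤ (j : ℕ)} fun _ => ⊥

section Pivots

variable {n : ℕ}

theorem mem_vanishingFrom {m : ℕ} {x : Fin n → ℤ} :
    x ∈ vanishingFrom n m ↔ ∀ j : Fin n, m ≤ (j : ℕ) → x j = 0 := by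
  simp [vanishingFrom, Submodule.mem_pi]

theorem vanishingFrom_mono {m m' : ℕ} (h : m ≤ m') : vanishingFrom n m ≤ vanishingFrom n m' :=
  fun _ hx => mem_vanishingFrom.mpr fun j hj => mem_vanishingFrom.mp hx j (h.trans hj)

theorem vanishingFrom_self : vanishingFrom n n = ⊤ :=
  eq_top_iff.mpr fun _ _ => mem_vanishingFrom.mpr fun j hj => absurd j.isLt (not_lt.mpr hj)

theorem exists_sub_mem_span_reduced {w : Fin n → Fin n → ℤ}
    (hw : ∀ k : Fin n, w k ∈ vanishingFrom n (k + 1)) (hdiag : ∀ k, w k k ≠ 0) {m : ℕ} (hm : m ≤ n)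
    (x : Fin n → ℤ) : ∃ y, y - x ∈ span ℤ (range w) ⊓ vanishingFrom n m ∧
      ∀ j : Fin n, (j : ℕ) < m → 0 ≤ y j ∧ y j < |w j j| := by
  induction m generalizing x with
  | zero => exact ⟨x, by simp, fun j hj => absurd hj (Nat.not_lt_zero _)⟩
  | succ m ih =>
    let k : Fin n := ⟨m, hm⟩
    -- subtracting a multiple of `w k` reduces the entry `k`; the IH then fixes the entries `< k`
    -- without touching it
    let x' := x - (x k / w k k) • w k
    obtain ⟨y, ⟨hy_span, hy_vanish⟩, hy_red⟩ := ih (Nat.le_of_succ_le hm) x'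
    have hx' : x' - x ∈ span ℤ (range w) ⊓ vanishingFrom n (m + 1) := by
      rw [sub_sub_cancel_left]
      exact neg_mem ⟨smul_mem _ _ (subset_span ⟨k, rfl⟩), smul_mem _ _ (hw k)⟩
    have hyk : y k = x k % w k k := by
      have := mem_vanishingFrom.mp hy_vanish k le_rfl
      simp only [Pi.sub_apply, sub_eq_zero] at this
      simp [this, x', Int.emod_def, mul_comm]
    refine ⟨y, by
      simpa using add_mem (mem_inf.mpr ⟨hy_span, vanishingFrom_mono m.le_succ hy_vanish⟩) hx',
      fun j hj => ?_⟩
    rcases (Nat.lt_succ_iff.mp hj).lt_or_eq with hjm | hjm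
    · exact hy_red j hjm
    · rw [show j = k from Fin.ext hjm, hyk]
      exact ⟨Int.emod_nonneg _ (hdiag k), Int.emod_lt_abs _ (hdiag k)⟩

/-- The rows of a lower triangular basis of `Λ` with pivots `d`, as long as the pivots are
nonzero. -/
structure IsPivotFamily (Λ : Submodule ℤ (Fin n → ℤ)) (d : Fin n → ℤ) (v : Fin n → Fin n → ℤ) :
    Prop where
  mem : ∀ k, v k ∈ Λ
  mem_vanishingFrom_succ : ∀ k : Fin n, v k ∈ vanishingFrom n (k + 1)
  apply_self : ∀ k, v k k = d k
  dvd_apply : ∀ k : Fin n, ∀ x ∈ Λ ⊓ vanishingFrom n (k + 1), d k ∣ x k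

theorem exists_isPivotFamily (Λ : Submodule ℤ (Fin n → ℤ)) : ∃ d v, IsPivotFamily Λ d v := by
  let J : Fin n → Ideal ℤ := fun k => (Λ ⊓ vanishingFrom n (k + 1)).map (LinearMap.proj k)
  have hgen : ∀ k : Fin n, ∃ x ∈ Λ ⊓ vanishingFrom n (k + 1), x k = IsPrincipal.generator (J k) :=
    fun k => IsPrincipal.generator_mem (J k)
  choose v hv hvk using hgen
  refine ⟨fun k => IsPrincipal.generator (J k), v, fun k => (hv k).1, fun k => (hv k).2, hvk,
    fun k x hx => ?_⟩
  exact (IsPrincipal.mem_iff_generator_dvd (J k)).mp ⟨x, hx, rfl⟩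

namespace IsPivotFamily

variable {Λ : Submodule ℤ (Fin n → ℤ)} {d : Fin n → ℤ} {v : Fin n → Fin n → ℤ}

theorem apply_eq_zero (h : IsPivotFamily Λ d v) {k j : Fin n} (hkj : k < j) : v k j = 0 :=
  mem_vanishingFrom.mp (h.mem_vanishingFrom_succ k) j hkj

theorem linearIndependent (h : IsPivotFamily Λ d v) (hd : ∀ k, d k ≠ 0) :
    LinearIndependent ℤ v :=
  linearIndependent_of_lowerTriangular (fun _ _ => h.apply_eq_zero) fun k => h.apply_self k ▸ hd k

theorem mem_span_of_mem_vanishingFrom (h : IsPivotFamily Λ d v) {m : ℕ} (hm : m ≤ n) :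
    ∀ x ∈ Λ ⊓ vanishingFrom n m, x ∈ span ℤ (range v) := by
  induction m with
  | zero =>
    intro x hx
    have : x = 0 := funext fun j => mem_vanishingFrom.mp hx.2 j (Nat.zero_le _)
    simp [this]
  | succ m ih =>
    intro x ⟨hxΛ, hx⟩
    let k : Fin n := ⟨m, hm⟩
    obtain ⟨c, hc⟩ := h.dvd_apply k x ⟨hxΛ, hx⟩
    have hy : x - c • v k ∈ Λ ⊓ vanishingFrom n m := by
      refine ⟨sub_mem hxΛ (smul_mem _ _ (h.mem k)), mem_vanishingFrom.mpr fun j hj => ?_⟩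
      rcases hj.eq_or_lt with hjk | hjk
      · simp [show j = k from Fin.ext hjk.symm, hc, h.apply_self, mul_comm]
      · simp [mem_vanishingFrom.mp hx j hjk, h.apply_eq_zero (show k < j from hjk)]
    simpa using add_mem (ih (Nat.le_of_succ_le hm) _ hy) (smul_mem _ c (subset_span ⟨k, rfl⟩))

theorem span_eq (h : IsPivotFamily Λ d v) : span ℤ (range v) = Λ := by
  refine le_antisymm (span_le.mpr (range_subset_iff.mpr h.mem)) fun x hx => ?_
  exact h.mem_span_of_mem_vanishingFrom le_rfl x ⟨hx, vanishingFrom_self ▸ mem_top⟩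

theorem dvd_of_smul_single_mem (h : IsPivotFamily Λ d v) (k : Fin n) {c : ℤ}
    (hc : c • Pi.single k 1 ∈ Λ) : d k ∣ c := by
  have hsupp : c • Pi.single k (1 : ℤ) ∈ vanishingFrom n (k + 1) :=
    mem_vanishingFrom.mpr fun j hj => by simp [Fin.ne_of_gt hj]
  simpa using h.dvd_apply k _ ⟨hc, hsupp⟩

theorem exists_abs_apply_le (h : IsPivotFamily Λ d v) (hd : ∀ k, d k ≠ 0) :
    ∃ v', IsPivotFamily Λ d v' ∧ ∀ k j, |v' k j| ≤ |d j| := by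
  have hdiag : ∀ k, v k k ≠ 0 := fun k => h.apply_self k ▸ hd k
  choose v' hsub hred using fun k : Fin n =>
    exists_sub_mem_span_reduced h.mem_vanishingFrom_succ hdiag k.isLt.le (v k)
  have hv' : ∀ k, v' k = (v' k - v k) + v k := fun k => (sub_add_cancel _ _).symm
  have h' : IsPivotFamily Λ d v' := by
    refine ⟨fun k => ?_, fun k => ?_, fun k => ?_, h.dvd_apply⟩
    · rw [hv' k]
      exact add_mem (h.span_eq ▸ (hsub k).1) (h.mem k)
    · rw [hv' k]
      exact add_mem (vanishingFrom_mono k.val.le_succ (hsub k).2) (h.mem_vanishingFrom_succ k)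
    · have := mem_vanishingFrom.mp (hsub k).2 k le_rfl
      rw [Pi.sub_apply, sub_eq_zero] at this
      rw [this, h.apply_self]
  refine ⟨v', h', fun k j => ?_⟩
  rcases lt_trichotomy k j with hkj | rfl | hjk
  · simp [h'.apply_eq_zero hkj]
  · rw [h'.apply_self]
  · obtain ⟨hnonneg, hlt⟩ := hred k j hjk
    rw [abs_of_nonneg hnonneg, ← h.apply_self]
    exact hlt.le

end IsPivotFamily

end Pivots

theorem basis_with_small_entries_general (n : ℕ) (Λ : Submodule ℤ (Fin n → ℤ))
    (D : ℕ) (hD : D = Nat.card ((Fin n → ℤ) ⧸ Λ)) (hfin : D ≠ 0) :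
    ∃ v : Module.Basis (Fin n) ℤ Λ, ∀ i j : Fin n, |((v i : Fin n → ℤ) j)| ≤ (D : ℤ) := by
  obtain ⟨d, w, hw⟩ := exists_isPivotFamily Λ
  have hdD : ∀ k, d k ∣ D := fun k =>
    hw.dvd_of_smul_single_mem k (by simpa [hD] using nsmul_card_quotient_mem Λ (Pi.single k 1))
  have hd : ∀ k, d k ≠ 0 := fun k hk => hfin (by simpa [hk] using hdD k)
  obtain ⟨v, hv, hle⟩ := hw.exists_abs_apply_le hd
  obtain ⟨b, hb⟩ := exists_basis_coe_eq (hv.linearIndependent hd) hv.span_eq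
  refine ⟨b, fun i j => hb i ▸ (hle i j).trans ?_⟩
  exact Int.le_of_dvd (by omega) ((abs_dvd _ _).mpr (hdD j))

/-- Let `n ≥ 1` and let `Λ ⊆ ℤ^n` be a subgroup of finite index `D = #(ℤ^n/Λ)`. Then there
exists a `ℤ`-basis `v₁, …, v_n` of `Λ` such that every entry of every `v_i` has absolute
value at most `D`. -/
theorem basis_with_small_entries (n : ℕ) (hn : 1 ≤ n) (Λ : Submodule ℤ (Fin n → ℤ))
    (D : ℕ) (hD : D = Nat.card ((Fin n → ℤ) ⧸ Λ)) (hfin : D ≠ 0) :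
    ∃ v : Module.Basis (Fin n) ℤ Λ, ∀ i j : Fin n, |((v i : Fin n → ℤ) j)| ≤ (D : ℤ) :=
  basis_with_small_entries_general n Λ D hD hfin
end

section
/- Let n ≥ 1 and let A be an n × n integer matrix with determinant D > 0. Then there exists a matrix U ∈ GL_n(ℤ) (an integer matrix with determinant ±1) such that every entry of the product AU has absolute value at most D. -/
/-!
Induction on the size of `A`. Euclid's algorithm, run by unimodular column operations, clears
the last row of `A` except for its diagonal entry `a`, so `A` becomes block upper triangular
with a square block `C` and `|det A| = |det C| * |a|`. By induction `C` can be reduced to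
entries bounded by `|det C|`. Since `C * adjugate C = det C • 1`, the columns of `C` span
`det C • ℤⁿ`, so adding combinations of them reduces the last column modulo `det C`.
-/

open Matrix

section

variable {ι : Type*} [Fintype ι] [DecidableEq ι]

theorem vecMul_transvection {R : Type*} [CommRing R] (v : ι → R) (i j : ι) (c : R) :
    v ᵥ* transvection i j c = Function.update v j (v j + v i * c) := by
  ext k
  rw [transvection, vecMul_add, vecMul_one, Pi.add_apply]
  rcases eq_or_ne k j with rfl | hk
  · simp [vecMul, dotProduct, single_apply]
  · simp [vecMul, dotProduct, hk, hk.symm]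

theorem exists_unimodular_vecMul_eq_emod_swap {i j : ι} (hij : i ≠ j) (v : ι → ℤ) :
    ∃ U : Matrix ι ι ℤ, IsUnit U.det ∧
      v ᵥ* U = Function.update v i (v i % v j) ∘ Equiv.swap i j := by
  refine ⟨transvection j i (-(v i / v j)) * (Equiv.swap i j).permMatrix ℤ, ?_, ?_⟩
  · rw [det_mul, det_transvection_of_ne _ _ hij.symm, det_permutation, one_mul]
    exact Units.isUnit _
  · rw [← vecMul_vecMul, vecMul_permMatrix (σ := Equiv.swap i j), Equiv.symm_swap,
      vecMul_transvection, Int.emod_def, mul_neg, sub_eq_add_neg]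

open Finset in
/-- Euclid's algorithm: `∑_{j ≠ i₀} |v j|` decreases at every step. -/
theorem exists_unimodular_vecMul_eq_zero_of_ne (i₀ : ι) (v : ι → ℤ) :
    ∃ U : Matrix ι ι ℤ, IsUnit U.det ∧ ∀ j ≠ i₀, (v ᵥ* U) j = 0 := by
  induction hN : ∑ j ∈ univ.erase i₀, (v j).natAbs using Nat.strong_induction_on
    generalizing v with
  | _ N ih =>
  by_cases hv : ∀ j ≠ i₀, v j = 0
  · exact ⟨1, by simp, by simpa using hv⟩
  push Not at hv
  obtain ⟨j, hj, hvj⟩ := hv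
  obtain ⟨U₁, hU₁, hvU₁⟩ := exists_unimodular_vecMul_eq_emod_swap hj.symm v
  have hlt_j : ((v ᵥ* U₁) j).natAbs < (v j).natAbs := by
    have hr_nonneg := Int.emod_nonneg (v i₀) hvj
    have hr_lt := Int.emod_lt (v i₀) hvj
    simp only [hvU₁, Function.comp_apply, Equiv.swap_apply_right, Function.update_self]
    omega
  have hvU₁_ne : ∀ k ∈ univ.erase i₀, k ≠ j → (v ᵥ* U₁) k = v k := fun k hk hkj => by
    simp [hvU₁, Equiv.swap_apply_of_ne_of_ne (ne_of_mem_erase hk) hkj, ne_of_mem_erase hk]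
  have hlt : ∑ k ∈ univ.erase i₀, ((v ᵥ* U₁) k).natAbs < N := by
    rw [← hN]
    refine sum_lt_sum (fun k hk => ?_) ⟨j, mem_erase.2 ⟨hj, mem_univ _⟩, hlt_j⟩
    rcases eq_or_ne k j with rfl | hkj
    · exact hlt_j.le
    · rw [hvU₁_ne k hk hkj]
  obtain ⟨U₂, hU₂, hvU₂⟩ := ih _ hlt (v ᵥ* U₁) rfl
  exact ⟨U₁ * U₂, by rw [det_mul]; exact hU₁.mul hU₂, by simpa [vecMul_vecMul] using hvU₂⟩

theorem abs_det_mul_of_isUnit (A : Matrix ι ι ℤ) {U : Matrix ι ι ℤ} (hU : IsUnit U.det) :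
    |(A * U).det| = |A.det| := by
  rw [det_mul, abs_mul, Int.isUnit_iff_abs_eq.mp hU, mul_one]

theorem exists_add_mul_eq_map_emod_det {κ : Type*} (C : Matrix ι ι ℤ) (c : Matrix ι κ ℤ) :
    ∃ X : Matrix ι κ ℤ, c + C * X = c.map (· % C.det) := by
  refine ⟨-(C.adjugate * c.map (· / C.det)), ?_⟩
  rw [Matrix.mul_neg, ← Matrix.mul_assoc, mul_adjugate, smul_mul, Matrix.one_mul]
  ext i k
  simp [Int.emod_def, sub_eq_add_neg]

end

def HasDetBoundedReduction (ι : Type*) [Fintype ι] [DecidableEq ι] : Prop :=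
  ∀ A : Matrix ι ι ℤ, A.det ≠ 0 →
    ∃ U : Matrix ι ι ℤ, IsUnit U.det ∧ ∀ i j, |(A * U) i j| ≤ |A.det|

namespace HasDetBoundedReduction

variable {α β κ : Type*} [Fintype α] [DecidableEq α] [Fintype β] [DecidableEq β]
  [Fintype κ] [DecidableEq κ]

theorem of_equiv (e : α ≃ β) (h : HasDetBoundedReduction α) : HasDetBoundedReduction β := by
  intro A hA
  obtain ⟨U, hU, hAU⟩ := h (A.submatrix e e) (by rwa [det_submatrix_equiv_self])
  refine ⟨U.submatrix e.symm e.symm, by rwa [det_submatrix_equiv_self], fun i j => ?_⟩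
  have hA' : A = (A.submatrix e e).submatrix e.symm e.symm := by simp
  rw [hA', submatrix_mul_equiv, submatrix_apply, det_submatrix_equiv_self]
  simpa using hAU (e.symm i) (e.symm j)

theorem fromBlocks_zero₂₁ [Unique κ] (h : HasDetBoundedReduction α) (C : Matrix α α ℤ)
    (c : Matrix α κ ℤ) (a : Matrix κ κ ℤ) (hdet : (fromBlocks C c 0 a).det ≠ 0) :
    ∃ W : Matrix (α ⊕ κ) (α ⊕ κ) ℤ, IsUnit W.det ∧
      ∀ i j, |(fromBlocks C c 0 a * W) i j| ≤ |(fromBlocks C c 0 a).det| := by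
  rw [det_fromBlocks_zero₂₁, det_unique a] at hdet ⊢
  obtain ⟨hC, ha⟩ := mul_ne_zero_iff.mp hdet
  obtain ⟨V, hV, hCV⟩ := h C hC
  obtain ⟨X, hX⟩ := exists_add_mul_eq_map_emod_det C c
  refine ⟨fromBlocks V X 0 1, by simpa [det_fromBlocks_zero₂₁] using hV, ?_⟩
  have hBW : fromBlocks C c 0 a * fromBlocks V X 0 1 =
      fromBlocks (C * V) (c.map (· % C.det)) 0 a := by
    rw [fromBlocks_multiply, ← hX]
    simp [add_comm]
  have hC_le : |C.det| ≤ |C.det * a default default| := by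
    rw [abs_mul]
    exact le_mul_of_one_le_right (abs_nonneg _) (Int.one_le_abs ha)
  rw [hBW]
  rintro (i | i) (j | j)
  · exact (hCV i j).trans hC_le
  · have hr_nonneg := Int.emod_nonneg (c i j) hC
    have hr_lt := Int.emod_lt_abs (c i j) hC
    rw [fromBlocks_apply₁₂, map_apply, abs_of_nonneg hr_nonneg]
    omega
  · rw [fromBlocks_apply₂₁, Matrix.zero_apply, abs_zero]
    positivity
  · rw [fromBlocks_apply₂₂, Subsingleton.elim i default, Subsingleton.elim j default, abs_mul]
    exact le_mul_of_one_le_left (abs_nonneg _) (Int.one_le_abs hC)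

theorem sum_unique [Unique κ] (h : HasDetBoundedReduction α) :
    HasDetBoundedReduction (α ⊕ κ) := by
  intro A hA
  obtain ⟨U₀, hU₀, hrow⟩ :=
    exists_unimodular_vecMul_eq_zero_of_ne (Sum.inr default) (A (Sum.inr default))
  have hB :
      fromBlocks (A * U₀).toBlocks₁₁ (A * U₀).toBlocks₁₂ 0 (A * U₀).toBlocks₂₂ = A * U₀ := by
    convert fromBlocks_toBlocks (A * U₀)
    ext k j
    rw [toBlocks₂₁, of_apply, Subsingleton.elim k default, mul_apply_eq_vecMul]
    exact (hrow _ Sum.inl_ne_inr).symm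
  have hB0 : (A * U₀).det ≠ 0 := by rw [det_mul]; exact mul_ne_zero hA hU₀.ne_zero
  obtain ⟨W, hW, hBW⟩ := h.fromBlocks_zero₂₁ _ _ _ (hB ▸ hB0)
  rw [hB] at hBW
  refine ⟨U₀ * W, by rw [det_mul]; exact hU₀.mul hW, fun i j => ?_⟩
  rw [← Matrix.mul_assoc, ← abs_det_mul_of_isUnit A hU₀]
  exact hBW i j

end HasDetBoundedReduction

theorem hasDetBoundedReduction_fin : ∀ n, HasDetBoundedReduction (Fin n)
  | 0 => fun _ _ => ⟨1, by simp, fun i => i.elim0⟩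
  | n + 1 => ((hasDetBoundedReduction_fin n).sum_unique (κ := Fin 1)).of_equiv finSumFinEquiv

theorem Matrix.exists_unimodular_abs_mul_apply_le_abs_det {ι : Type*} [Fintype ι]
    [DecidableEq ι] (A : Matrix ι ι ℤ) (hA : A.det ≠ 0) :
    ∃ U : Matrix ι ι ℤ, IsUnit U.det ∧ ∀ i j, |(A * U) i j| ≤ |A.det| :=
  (hasDetBoundedReduction_fin _).of_equiv (Fintype.equivFin ι).symm A hA

theorem exists_unimodular_with_small_entries_general (n : ℕ)
    (A : Matrix (Fin n) (Fin n) ℤ) (hD : 0 < A.det) :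
    ∃ U : Matrix (Fin n) (Fin n) ℤ, IsUnit U.det ∧
      ∀ i j : Fin n, |(A * U) i j| ≤ A.det := by
  simpa only [abs_of_pos hD] using exists_unimodular_abs_mul_apply_le_abs_det A hD.ne'

/-- Let `n ≥ 1` and let `A` be an `n × n` integer matrix with determinant `D > 0`. Then there
exists `U ∈ GL_n(ℤ)` such that every entry of `A * U` has absolute value at most `D`. -/
theorem exists_unimodular_with_small_entries (n : ℕ) (hn : 1 ≤ n)
    (A : Matrix (Fin n) (Fin n) ℤ) (hD : 0 < A.det) :
    ∃ U : Matrix (Fin n) (Fin n) ℤ, IsUnit U.det ∧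
      ∀ i j : Fin n, |(A * U) i j| ≤ A.det :=
  exists_unimodular_with_small_entries_general n A hD
end

section
/- Let K be a number field of degree n. Let H ⊆ (K⊗ℝ)^× be the subgroup generated by the image of the unit group O_K^× under the diagonal embedding K → K⊗ℝ together with the positive real scalars {t·1 : t ∈ ℝ, t > 0}. Then the quotient topological group (K⊗ℝ)^× / H is a compact commutative topological group. -/
/-!
Multiplying by a unit moves any `x ∈ (K⊗ℝ)ˣ` into the fundamental cone (Dirichlet's unit
theorem), and a positive scalar then normalises its norm to `1`. Points of the fundamental cone
of norm `1` lie in the bounded set `normLeOne K`, and the closure of that set meets the norm-one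
hypersurface in a compact set of units. So a compact subset of `(K⊗ℝ)ˣ` surjects onto the
quotient.
-/

open NumberField NumberField.mixedEmbedding

theorem QuotientGroup.compactSpace_of_forall_exists_mul_mem {G : Type*} [Group G]
    [TopologicalSpace G] {H : Subgroup G} {U : Set G} (hU : IsCompact U)
    (hUH : ∀ x : G, ∃ h ∈ H, x * h ∈ U) : CompactSpace (G ⧸ H) := by
  refine isCompact_univ_iff.mp ?_
  convert hU.image (QuotientGroup.continuous_mk (N := H))
  refine (Set.eq_univ_of_forall fun z => ?_).symm
  obtain ⟨x, rfl⟩ := QuotientGroup.mk_surjective z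
  obtain ⟨h, hH, hxh⟩ := hUH x
  exact ⟨x * h, hxh, QuotientGroup.mk_mul_of_mem x hH⟩

namespace NumberField.mixedEmbedding

open InfinitePlace fundamentalCone

variable {K : Type*} [Field K] [NumberField K]

theorem isUnit_of_norm_ne_zero {x : mixedSpace K} (hx : mixedEmbedding.norm x ≠ 0) :
    IsUnit x := by
  have hw := mixedEmbedding.norm_ne_zero_iff.mp hx
  refine Prod.isUnit_iff.mpr ⟨Pi.isUnit_iff.mpr fun w => ?_, Pi.isUnit_iff.mpr fun w => ?_⟩
  · simpa [normAtPlace_apply_of_isReal w.2] using hw w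
  · simpa [normAtPlace_apply_of_isComplex w.2] using hw w

theorem isCompact_units_preimage_closure_normLeOne_inter_norm_eq_one :
    IsCompact (Units.val ⁻¹' (closure (normLeOne K) ∩ mixedEmbedding.norm ⁻¹' {1}) :
      Set (mixedSpace K)ˣ) := by
  -- the metric structure on `mixedSpace K` needs decidability of `IsReal`
  classical
  have hclosure : IsCompact (closure (normLeOne K)) :=
    (isBounded_normLeOne K).isCompact_closure (α := mixedSpace K)
  have hnorm : IsClosed (mixedEmbedding.norm ⁻¹' {1} : Set (mixedSpace K)) :=
    isClosed_singleton.preimage (mixedEmbedding.continuous_norm K)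
  refine Units.isOpenEmbedding_val.isInducing.isCompact_preimage' (hclosure.inter_right hnorm) ?_
  rintro x ⟨-, hx⟩
  exact isUnit_of_norm_ne_zero (by simp_all)

theorem exists_unit_pos_smul_mem_normLeOne {x : mixedSpace K}
    (hx : mixedEmbedding.norm x ≠ 0) : ∃ (u : (𝓞 K)ˣ) (c : ℝ), 0 < c ∧
      c • u • x ∈ normLeOne K ∧ mixedEmbedding.norm (c • u • x) = 1 := by
  obtain ⟨u, hu⟩ := exists_unit_smul_mem hx
  have hux : 0 < mixedEmbedding.norm (u • x) := norm_pos_of_mem hu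
  -- since `norm (c • y) = |c| ^ [K : ℚ] * norm y`, this `c` rescales `u • x` to norm `1`
  set c : ℝ := mixedEmbedding.norm (u • x) ^ (-(Module.finrank ℚ K : ℝ)⁻¹)
  have hc : 0 < c := Real.rpow_pos_of_pos hux _
  have hnorm : mixedEmbedding.norm (c • u • x) = 1 := by
    rw [mixedEmbedding.norm_smul, abs_of_pos hc, ← Real.rpow_natCast, ← Real.rpow_mul hux.le,
      neg_mul, inv_mul_cancel₀ (Nat.cast_ne_zero.mpr Module.finrank_pos.ne'),
      Real.rpow_neg_one, inv_mul_cancel₀ hux.ne']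
  exact ⟨u, c, hc, ⟨smul_mem_of_mem hu hc.ne', hnorm.le⟩, hnorm⟩

end NumberField.mixedEmbedding

/-- **Compactness of `(K⊗ℝ)ˣ` modulo units and positive scalars.**
Let `H` be the subgroup of `(K⊗ℝ)ˣ` generated by the image of `(𝓞 K)ˣ` and the positive
real scalars. Then the quotient topological group `(K⊗ℝ)ˣ / H` is a compact commutative
topological group. -/
theorem mixedSpace_units_quotient_compact (K : Type*) [Field K] [NumberField K] :
    ∀ H : Subgroup ((mixedSpace K)ˣ),
      H = Subgroup.closure
        ({x : (mixedSpace K)ˣ | ∃ u : (𝓞 K)ˣ, (x : mixedSpace K) = mixedEmbedding K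
            ((u : 𝓞 K) : K)} ∪
         {x : (mixedSpace K)ˣ | ∃ t : ℝ, 0 < t ∧ (x : mixedSpace K) = t • (1 : mixedSpace K)}) →
      CompactSpace ((mixedSpace K)ˣ ⧸ H) ∧
      ∀ x y : (mixedSpace K)ˣ ⧸ H, x * y = y * x := by
  intro H hH
  refine ⟨QuotientGroup.compactSpace_of_forall_exists_mul_mem
    isCompact_units_preimage_closure_normLeOne_inter_norm_eq_one fun x => ?_,
    fun x y => mul_comm x y⟩
  obtain ⟨u, c, hc, hmem, hnorm⟩ :=
    exists_unit_pos_smul_mem_normLeOne (x.isUnit.map mixedEmbedding.norm).ne_zero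
  let eu : (mixedSpace K)ˣ := Units.map (mixedEmbedding K : K →* mixedSpace K)
    (Units.map (algebraMap (𝓞 K) K : 𝓞 K →* K) u)
  let ec : (mixedSpace K)ˣ := Units.map (algebraMap ℝ (mixedSpace K) : ℝ →* mixedSpace K)
    (Units.mk0 c hc.ne')
  have heu : eu ∈ H := hH ▸ Subgroup.subset_closure (Or.inl ⟨u, rfl⟩)
  have hec : ec ∈ H :=
    hH ▸ Subgroup.subset_closure (Or.inr ⟨c, hc, Algebra.algebraMap_eq_smul_one c⟩)
  have hval : ((x * (ec * eu) : (mixedSpace K)ˣ) : mixedSpace K) =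
      c • u • (x : mixedSpace K) := by
    simp only [Units.val_mul, Units.coe_map, Units.val_mk0, MonoidHom.coe_coe, unitSMul_smul,
      Algebra.smul_def, ec, eu]
    ring
  refine ⟨ec * eu, H.mul_mem hec heu, ?_⟩
  rw [Set.mem_preimage, hval]
  exact ⟨subset_closure hmem, hnorm⟩
end
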